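/- The statement checker only promotes bindings and preserves existing names: for every sequence of statements ss and environment τ, if 𝒩𝒮ℳ⟦ss⟧τ = Succeed τ', then for every variable v, either τ'(v) = τ(v), or τ(v) = Noname and τ'(v) = Named n for some name n. In particular, if τ(v) = Named n then τ'(v) = Named n. -/
import Mathlib


/-- A named quantity: either `Named n` for a name (string) `n`, or `Noname`. -/
inductive NamedQ where
  | Named : String → NamedQ
  | Noname : NamedQ
deriving DecidableEq

/-- The partial operation ◇ on named quantities (`none` = undefined). -/
def diamond : NamedQ → NamedQ → Option NamedQ
  | .Named n₁, .Named n₂ => if n₁ = n₂ then some (.Named n₁) else none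
  | .Named n, .Noname => some (.Named n)
  | .Noname, .Named n => some (.Named n)
  | .Noname, .Noname => some .Noname

/-- The total operation △ on named quantities: always returns `Noname`. -/
def triangle : NamedQ → NamedQ → NamedQ := fun _ _ => .Noname

/-- Unit expressions over a type `V` of variables. -/
inductive UExp (V : Type) where
  | var : V → UExp V
  | add : UExp V → UExp V → UExp V
  | smul : ℝ → UExp V → UExp V
  | mul : UExp V → UExp V → UExp V

/-- The partial analysis function 𝒩ℰ. -/
def NE {V : Type} (τ : V → NamedQ) : UExp V → Option NamedQ
  | .var v => some (τ v)
  | .add e₁ e₂ => do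
      let q₁ ← NE τ e₁
      let q₂ ← NE τ e₂
      diamond q₁ q₂
  | .smul _ e => NE τ e
  | .mul e₁ e₂ => do
      let q₁ ← NE τ e₁
      let q₂ ← NE τ e₂
      pure (triangle q₁ q₂)

/-- The result of a check: `Succeed τ` with an (updated) environment, or
`Fail`. -/
inductive AssignState (V : Type) where
  | Succeed : (V → NamedQ) → AssignState V
  | Fail : AssignState V

/-- The assignment check `qn₁ ⊲_{τ,uv} qn₂`. -/
def tassign {V : Type} [DecidableEq V] (τ : V → NamedQ) (uv : V) :
    NamedQ → NamedQ → AssignState V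
  | .Named n₁, .Named n₂ => if n₁ = n₂ then .Succeed τ else .Fail
  | .Named _, .Noname => .Succeed τ
  | .Noname, .Noname => .Succeed τ
  | .Noname, .Named n => .Succeed (Function.update τ uv (.Named n))

/-- Statements: assignments `uv := e` and conditionals
`if b then ss₁ else ss₂` over sequences of statements, where `B` is the type
of boolean expressions. -/
inductive UStmt (V B : Type) where
  | assign : V → UExp V → UStmt V B
  | cond : B → List (UStmt V B) → List (UStmt V B) → UStmt V B

mutual
/-- The checker 𝒩𝒮 for a single statement. -/
def NS {V B : Type} [DecidableEq V] (τ : V → NamedQ) :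
    UStmt V B → AssignState V
  | .assign uv e =>
      match NE τ e with
      | none => .Fail
      | some q => tassign τ uv (τ uv) q
  | .cond _ ss₁ ss₂ =>
      match NSM τ ss₁ with
      | .Fail => .Fail
      | .Succeed τ₁ => NSM τ₁ ss₂

/-- The checker 𝒩𝒮ℳ for a sequence of statements, threading the
environment. -/
def NSM {V B : Type} [DecidableEq V] (τ : V → NamedQ) :
    List (UStmt V B) → AssignState V
  | [] => .Succeed τ
  | s :: ss =>
      match NS τ s with
      | .Fail => .Fail
      | .Succeed τ₁ => NSM τ₁ ss
end


def Promotes {V : Type} (τ τ' : V → NamedQ) : Prop :=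
  ∀ v, τ' v = τ v ∨ (τ v = .Noname ∧ ∃ n, τ' v = .Named n)

theorem promotes_trans {V : Type} {τ τ₁ τ₂ : V → NamedQ}
    (h₁ : Promotes τ τ₁) (h₂ : Promotes τ₁ τ₂) : Promotes τ τ₂ := by
  intro v
  rcases h₁ v with e1 | ⟨e1, n1, e1'⟩ <;> rcases h₂ v with e2 | ⟨e2, n2, e2'⟩
  · exact Or.inl (e2.trans e1)
  · exact Or.inr ⟨e1 ▸ e2, n2, e2'⟩
  · exact Or.inr ⟨e1, n1, e2.trans e1'⟩
  · rw [e1'] at e2; exact absurd e2 (by simp)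

mutual
theorem ns_promotes {V B : Type} [DecidableEq V] (s : UStmt V B)
    (τ τ' : V → NamedQ) (h : NS τ s = .Succeed τ') : Promotes τ τ' := by
  cases s with
  | assign uv e =>
    rw [NS] at h
    cases hne : NE τ e with
    | none => rw [hne] at h; exact absurd h (by simp)
    | some q =>
      rw [hne] at h
      cases hτ : τ uv <;> cases q <;> rw [hτ] at h <;> simp [tassign] at h
      · rename_i n₁ n₂
        split at h
        · cases h; exact fun v => Or.inl rfl
        · exact absurd h (by simp)
      · cases h; exact fun v => Or.inl rfl
      · rename_i n
        subst h
        intro v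
        by_cases hv : v = uv
        · subst hv; exact Or.inr ⟨hτ, n, by simp [Function.update]⟩
        · exact Or.inl (Function.update_of_ne hv _ _)
      · cases h; exact fun v => Or.inl rfl
  | cond b ss₁ ss₂ =>
    rw [NS] at h
    cases h1 : NSM τ ss₁ with
    | Fail => rw [h1] at h; exact absurd h (by simp)
    | Succeed τ₁ =>
      rw [h1] at h
      exact promotes_trans (nsm_promotes_aux ss₁ τ τ₁ h1)
        (nsm_promotes_aux ss₂ τ₁ τ' h)

theorem nsm_promotes_aux {V B : Type} [DecidableEq V] (ss : List (UStmt V B))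
    (τ τ' : V → NamedQ) (h : NSM τ ss = .Succeed τ') : Promotes τ τ' := by
  cases ss with
  | nil => rw [NSM] at h; cases h; exact fun v => Or.inl rfl
  | cons s ss =>
    rw [NSM] at h
    cases h1 : NS τ s with
    | Fail => rw [h1] at h; exact absurd h (by simp)
    | Succeed τ₁ =>
      rw [h1] at h
      exact promotes_trans (ns_promotes s τ τ₁ h1) (nsm_promotes_aux ss τ₁ τ' h)
end

/-- the statement checker only promotes bindings and preserves
existing names: if `𝒩𝒮ℳ⟦ss⟧τ = Succeed τ'` then every variable's binding is
unchanged, or was `Noname` and became `Named n`; in particular `Named`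
bindings are preserved. -/
theorem nsm_promotes {V B : Type} [DecidableEq V] (ss : List (UStmt V B))
    (τ τ' : V → NamedQ) (h : NSM τ ss = .Succeed τ') :
    (∀ v, τ' v = τ v ∨ (τ v = .Noname ∧ ∃ n, τ' v = .Named n)) ∧
    (∀ v n, τ v = .Named n → τ' v = .Named n) := by
  have hp := nsm_promotes_aux ss τ τ' h
  refine ⟨hp, fun v n hv => ?_⟩
  rcases hp v with e | ⟨e, _⟩
  · rw [e, hv]
  · rw [hv] at e; exact absurd e (by simp)
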